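/- If T is a bounded operator on a Hilbert space which is both concave (I - 2T*T + T*²T² ≤ 0) and an m-isometry for some m ≥ 2, then T is a 2-isometry, i.e., I - 2T*T + T*²T² = 0. -/

import Mathlib

/-!
Fix `x` and put `a n = ‖Tⁿ x‖²`. Since `⟪β_j(T) Tⁿx, Tⁿx⟫ = (-1)ʲ Δʲ a n`, concavity of `T` says
that `a` has nonpositive second differences and the `m`-isometry condition says that its `m`-th
differences vanish. A nonnegative concave sequence is nondecreasing, so its first differences
decrease to a finite limit and the second differences tend to `0`; as their `(m - 2)`-th
differences vanish, they vanish identically. Hence `⟪β₂(T) x, x⟫ = 0` for every `x`, and the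
self-adjoint operator `β₂(T)` is `0`.
-/

open Filter Topology fwdDiff

theorem eq_zero_of_fwdDiff_iter_eq_zero_of_tendsto {G : Type*} [AddCommGroup G]
    [TopologicalSpace G] [IsTopologicalAddGroup G] [T2Space G] :
    ∀ (r : ℕ) {e : ℕ → G}, Δ_[1] ^[r] e = 0 → Tendsto e atTop (𝓝 0) → e = 0
  | 0, _, hr, _ => hr
  | r + 1, e, hr, he => by
    have hΔ : Δ_[1] e = 0 :=
      eq_zero_of_fwdDiff_iter_eq_zero_of_tendsto r hr <| by
        rw [← sub_self 0]; exact (he.comp (tendsto_add_atTop_nat 1)).sub he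
    have hshift : ∀ n k, e (k + n) = e n := fun n k => by
      induction k with
      | zero => rw [zero_add]
      | succ k ih => rw [← ih, add_right_comm, ← sub_eq_zero, ← fwdDiff, hΔ, Pi.zero_apply]
    funext n
    exact tendsto_nhds_unique (tendsto_const_nhds.congr (hshift n · |>.symm))
      (he.comp (tendsto_add_atTop_nat n))

theorem fwdDiff_nonneg_of_nonneg_of_antitone {a : ℕ → ℝ} (ha : ∀ n, 0 ≤ a n)
    (hd : Antitone (Δ_[1] a)) (n : ℕ) : 0 ≤ Δ_[1] a n := by
  by_contra! hneg
  have hlin : ∀ k : ℕ, a (n + k) ≤ a n + k * Δ_[1] a n := fun k => by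
    induction k with
    | zero => simp
    | succ k ih =>
      have hstep : a (n + (k + 1)) = a (n + k) + Δ_[1] a (n + k) := by
        rw [fwdDiff, ← add_assoc]; ring
      have := hd (Nat.le_add_right n k)
      rw [hstep]; push_cast; linarith
  obtain ⟨k, hk⟩ := exists_nat_gt (a n / -Δ_[1] a n)
  rw [div_lt_iff₀ (neg_pos.mpr hneg)] at hk
  linarith [hlin k, ha (n + k)]

theorem fwdDiff_iter_two_eq_zero {a : ℕ → ℝ} {m : ℕ} (hm : 2 ≤ m) (ha : ∀ n, 0 ≤ a n)
    (hconc : ∀ n, Δ_[1] ^[2] a n ≤ 0) (hpoly : Δ_[1] ^[m] a = 0) : Δ_[1] ^[2] a = 0 := by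
  have hanti : Antitone (Δ_[1] a) :=
    antitone_nat_of_succ_le fun n => sub_nonpos.mp (hconc n)
  have hbdd : BddBelow (Set.range (Δ_[1] a)) :=
    ⟨0, Set.forall_mem_range.mpr (fwdDiff_nonneg_of_nonneg_of_antitone ha hanti)⟩
  have hconv := tendsto_atTop_ciInf hanti hbdd
  refine eq_zero_of_fwdDiff_iter_eq_zero_of_tendsto (m - 2) ?_ ?_
  · rw [← Function.iterate_add_apply, Nat.sub_add_cancel hm, hpoly]
  · rw [← sub_self (⨅ n, Δ_[1] a n)]
    exact (hconv.comp (tendsto_add_atTop_nat 1)).sub hconv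

namespace ContinuousLinearMap

variable {𝕜 H : Type*} [RCLike 𝕜] [NormedAddCommGroup H] [InnerProductSpace 𝕜 H]

theorem eq_zero_of_isSymmetric_of_re_inner_self_eq_zero {T : H →L[𝕜] H}
    (hT : (T : H →ₗ[𝕜] H).IsSymmetric) (h : ∀ x, RCLike.re (inner 𝕜 (T x) x) = 0) : T = 0 :=
  coe_injective <| hT.inner_map_self_eq_zero.mp fun x => by
    rw [← hT.coe_re_inner_apply_self, coe_coe, h x, RCLike.ofReal_zero]

variable [CompleteSpace H]

/-- The operator `β_m(T)`; `T` is an `m`-isometry iff it vanishes. -/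
noncomputable def isometryDefect (T : H →L[𝕜] H) (m : ℕ) : H →L[𝕜] H :=
  ∑ k ∈ Finset.range (m + 1), ((-1 : 𝕜) ^ k * (m.choose k : 𝕜)) • (adjoint T ^ k * T ^ k)

theorem isometryDefect_two (T : H →L[𝕜] H) :
    T.isometryDefect 2 = 1 - 2 • (adjoint T * T) + adjoint T ^ 2 * T ^ 2 := by
  simp [isometryDefect, Finset.sum_range_succ, two_smul, sub_eq_add_neg]

theorem inner_adjoint_pow_mul_pow_apply_self (T : H →L[𝕜] H) (k : ℕ) (x : H) :
    inner 𝕜 ((adjoint T ^ k * T ^ k) x) x = (‖(T ^ k) x‖ ^ 2 : ℝ) := by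
  rw [mul_apply_eq_comp, ← star_eq_adjoint, ← star_pow, star_eq_adjoint,
    adjoint_inner_left, inner_self_eq_norm_sq_to_K]
  norm_cast

theorem fwdDiff_iter_norm_sq_pow_apply (T : H →L[𝕜] H) (m n : ℕ) (x : H) :
    Δ_[1] ^[m] (fun k => ‖(T ^ k) x‖ ^ 2) n
      = (-1) ^ m * RCLike.re (inner 𝕜 (T.isometryDefect m ((T ^ n) x)) ((T ^ n) x)) := by
  simp only [fwdDiff_iter_eq_sum_shift, isometryDefect, sum_apply, sum_inner, map_sum,
    Finset.mul_sum, smul_apply, inner_smul_left, inner_adjoint_pow_mul_pow_apply_self]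
  refine Finset.sum_congr rfl fun k hk => ?_
  have hsign : (-1 : ℝ) ^ (m - k) = (-1) ^ m * (-1) ^ k := by
    rw [← pow_sub_mul_pow (-1 : ℝ) (Finset.mem_range_succ_iff.mp hk), mul_assoc, ← mul_pow,
      neg_one_mul, neg_neg, one_pow, mul_one]
  have hre : RCLike.re ((-1 : 𝕜) ^ k) = (-1) ^ k := by
    rw [← RCLike.ofReal_one, ← RCLike.ofReal_neg, ← RCLike.ofReal_pow, RCLike.ofReal_re]
  rw [← mul_apply_eq_comp, ← pow_add, smul_eq_mul, mul_one, add_comm k n]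
  generalize ‖(T ^ (n + k)) x‖ ^ 2 = r
  simp only [zsmul_eq_mul, Int.cast_mul, Int.cast_pow, Int.cast_neg, Int.cast_one,
    Int.cast_natCast, hsign, map_mul, map_pow, map_neg, map_one, map_natCast, RCLike.mul_re, hre,
    RCLike.natCast_re, RCLike.natCast_im, RCLike.ofReal_re, RCLike.ofReal_im, mul_zero, sub_zero]
  ring

end ContinuousLinearMap

open ContinuousLinearMap

theorem stmt_9 {H : Type*} [NormedAddCommGroup H] [InnerProductSpace ℂ H] [CompleteSpace H]
    (T : H →L[ℂ] H) (m : ℕ) (hm : 2 ≤ m)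
    (hconc : (2 • (adjoint T * T) - 1 - (adjoint T) ^ 2 * T ^ 2).IsPositive)
    (hiso : ∑ k ∈ Finset.range (m + 1),
        ((-1 : ℂ) ^ k * (m.choose k : ℂ)) • ((adjoint T) ^ k * T ^ k) = 0) :
    (1 : H →L[ℂ] H) - 2 • (adjoint T * T) + (adjoint T) ^ 2 * T ^ 2 = 0 := by
  rw [← isometryDefect_two]
  replace hconc : (-T.isometryDefect 2).IsPositive := by
    convert hconc using 1
    rw [isometryDefect_two]
    abel
  have hconcave : ∀ x n, Δ_[1] ^[2] (fun k => ‖(T ^ k) x‖ ^ 2) n ≤ 0 := fun x n => by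
    have := hconc.re_inner_nonneg_left ((T ^ n) x)
    rw [neg_apply, inner_neg_left, map_neg, neg_nonneg] at this
    rwa [fwdDiff_iter_norm_sq_pow_apply, neg_one_sq, one_mul]
  have hpoly : ∀ x, Δ_[1] ^[m] (fun k => ‖(T ^ k) x‖ ^ 2) = 0 := fun x => funext fun n => by
    rw [fwdDiff_iter_norm_sq_pow_apply, show T.isometryDefect m = 0 from hiso, zero_apply,
      inner_zero_left, map_zero, mul_zero, Pi.zero_apply]
  refine neg_eq_zero.mp <| eq_zero_of_isSymmetric_of_re_inner_self_eq_zero hconc.isSymmetric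
    fun x => ?_
  have hβ₂ := congr_fun (fwdDiff_iter_two_eq_zero hm (fun _ => sq_nonneg _) (hconcave x)
    (hpoly x)) 0
  rw [fwdDiff_iter_norm_sq_pow_apply, neg_one_sq, one_mul, pow_zero, one_apply_eq_self,
    Pi.zero_apply] at hβ₂
  rw [neg_apply, inner_neg_left, map_neg, hβ₂, neg_zero]
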